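/- Let λ ∈ ℝ and let r be a positive integer. For all integers j, n ≥ 0 and all y ∈ ℝ, the degenerate r-Bell polynomials satisfy: φ^{(r)}_{j+n,λ}(y) = Σ_{k=0}^{n} Σ_{m=0}^{j} {n+r \brace k+r}_{r,λ} C(j,m) (k − nλ)_{j−m,λ} y^k φ^{(r)}_{m,λ}(y). -/
import Mathlib


open Finset

/-- The degenerate falling factorial `(x)_{n,λ} = ∏_{i=0}^{n-1} (x - iλ)`. -/
noncomputable def degFall (lam x : ℝ) (n : ℕ) : ℝ :=
  ∏ i ∈ Finset.range n, (x - (i : ℝ) * lam)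

/-- The degenerate `r`-Stirling numbers of the second kind
`{n+r \brace k+r}_{r,λ} = (1/k!) ∑_{j=0}^{k} (-1)^{k-j} C(k,j) (j+r)_{n,λ}`, equivalently
determined by `(x+r)_{n,λ} = ∑_{k=0}^{n} {n+r \brace k+r}_{r,λ} (x)_k` for all `x`. -/
noncomputable def degrStirling (lam : ℝ) (r : ℕ) (n k : ℕ) : ℝ :=
  (1 / (Nat.factorial k : ℝ)) * ∑ j ∈ Finset.range (k + 1),
    (-1 : ℝ) ^ (k - j) * (Nat.choose k j : ℝ) * degFall lam ((j : ℝ) + (r : ℝ)) n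

/-- The degenerate `r`-Bell polynomials
`φ^{(r)}_{n,λ}(x) = ∑_{k=0}^{n} {n+r \brace k+r}_{r,λ} x^k`. -/
noncomputable def degrBell (lam : ℝ) (r : ℕ) (n : ℕ) (x : ℝ) : ℝ :=
  ∑ k ∈ Finset.range (n + 1), degrStirling lam r n k * x ^ k

lemma degFall_succ (lam x : ℝ) (n : ℕ) :
    degFall lam x (n+1) = degFall lam x n * (x - (n : ℝ) * lam) :=
  Finset.prod_range_succ _ _

lemma degFall_add (lam x : ℝ) (n j : ℕ) :
    degFall lam x (n + j) = degFall lam x n * degFall lam (x - (n : ℝ) * lam) j := by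
  induction j with
  | zero => simp [degFall]
  | succ j ih =>
      rw [← Nat.add_assoc, degFall_succ, ih, degFall_succ]
      push_cast
      ring


lemma vand (lam a b : ℝ) (n : ℕ) :
    degFall lam (a + b) n =
      ∑ m ∈ Finset.range (n+1),
        (n.choose m : ℝ) * degFall lam a m * degFall lam b (n - m) := by
  induction n with
  | zero => simp [degFall]
  | succ n ih =>
      have key : ∀ m ∈ Finset.range (n+1),
          (n.choose m : ℝ) * degFall lam a m * degFall lam b (n - m) * (a + b - (n:ℝ)*lam)
          = (n.choose m : ℝ) * degFall lam a (m+1) * degFall lam b (n - m)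
            + (n.choose m : ℝ) * degFall lam a m * degFall lam b ((n+1) - m) := by
        intro m hm
        have hm' : m ≤ n := Nat.lt_succ_iff.mp (Finset.mem_range.mp hm)
        have h1 : (n + 1) - m = (n - m) + 1 := by omega
        rw [h1, degFall_succ, degFall_succ]
        have hc : ((n - m : ℕ) : ℝ) = (n : ℝ) - (m : ℝ) := by
          push_cast [Nat.cast_sub hm']; ring
        rw [hc]; ring
      rw [degFall_succ, ih, Finset.sum_mul, Finset.sum_congr rfl key, Finset.sum_add_distrib]
      -- now RHS target
      rw [Finset.sum_range_succ' (fun m => ((n+1).choose m : ℝ) * degFall lam a m * degFall lam b ((n+1) - m)) (n+1)]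
      have pascal : ∀ m, (((n+1).choose (m+1) : ℕ) : ℝ) = (n.choose m : ℝ) + (n.choose (m+1) : ℝ) := by
        intro m; rw [Nat.choose_succ_succ]; push_cast; ring
      have hsplit : ∀ m ∈ Finset.range (n+1),
          (((n+1).choose (m+1) : ℕ) : ℝ) * degFall lam a (m+1) * degFall lam b ((n+1) - (m+1))
          = (n.choose m : ℝ) * degFall lam a (m+1) * degFall lam b (n - m)
            + (n.choose (m+1) : ℝ) * degFall lam a (m+1) * degFall lam b (n - m) := by
        intro m hm
        have : (n + 1) - (m + 1) = n - m := by omega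
        rw [this, pascal]; ring
      rw [Finset.sum_congr rfl hsplit, Finset.sum_add_distrib]
      have hB : ∑ m ∈ Finset.range (n+1), (n.choose m : ℝ) * degFall lam a m * degFall lam b ((n+1) - m)
          = (degFall lam b (n+1))
            + ∑ m ∈ Finset.range n, (n.choose (m+1) : ℝ) * degFall lam a (m+1) * degFall lam b (n - m) := by
        rw [Finset.sum_range_succ' (fun m => (n.choose m : ℝ) * degFall lam a m * degFall lam b ((n+1) - m)) n]
        have : ∀ m ∈ Finset.range n,
            (n.choose (m+1) : ℝ) * degFall lam a (m+1) * degFall lam b ((n+1) - (m+1))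
            = (n.choose (m+1) : ℝ) * degFall lam a (m+1) * degFall lam b (n - m) := by
          intro m hm; congr 2; omega
        rw [Finset.sum_congr rfl this]
        simp [degFall]
        ring
      have hS2 : ∑ m ∈ Finset.range (n+1), (n.choose (m+1) : ℝ) * degFall lam a (m+1) * degFall lam b (n - m)
          = ∑ m ∈ Finset.range n, (n.choose (m+1) : ℝ) * degFall lam a (m+1) * degFall lam b (n - m) := by
        rw [Finset.sum_range_succ]
        simp
      rw [hS2, hB]
      simp [degFall]
      ring


noncomputable def U (lam : ℝ) (r : ℕ) (n k : ℕ) : ℝ :=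
  ∑ i ∈ Finset.range (k + 1),
    (-1 : ℝ) ^ i * (Nat.choose k i : ℝ) * degFall lam ((i : ℝ) + (r : ℝ)) n

lemma stirling_eq_U (lam : ℝ) (r n k : ℕ) :
    degrStirling lam r n k = (-1 : ℝ) ^ k / (Nat.factorial k : ℝ) * U lam r n k := by
  unfold degrStirling U
  rw [Finset.mul_sum, Finset.mul_sum]
  refine Finset.sum_congr rfl fun i hi => ?_
  have hik : i ≤ k := Nat.lt_succ_iff.mp (Finset.mem_range.mp hi)
  have hs : (-1 : ℝ) ^ (k - i) = (-1 : ℝ) ^ k * (-1 : ℝ) ^ i := by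
    have h1 : (-1 : ℝ) ^ (k - i) * (-1 : ℝ) ^ i = (-1 : ℝ) ^ k := by
      rw [← pow_add, Nat.sub_add_cancel hik]
    have h2 : ((-1 : ℝ) ^ i) * ((-1 : ℝ) ^ i) = 1 := by
      rw [← pow_add, ← two_mul, pow_mul]; norm_num
    calc (-1 : ℝ) ^ (k - i) = (-1 : ℝ) ^ (k-i) * ((-1:ℝ)^i * (-1:ℝ)^i) := by rw [h2, mul_one]
      _ = (-1:ℝ)^k * (-1:ℝ)^i := by rw [← mul_assoc, h1]
  rw [hs]; ring

lemma U_rec (lam : ℝ) (r n k : ℕ) :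
    U lam r (n+1) (k+1)
      = ((k:ℝ) + 1 + (r:ℝ) - (n:ℝ)*lam) * U lam r n (k+1) - ((k:ℝ)+1) * U lam r n k := by
  have key : ∀ i ∈ Finset.range (k+2),
      (-1:ℝ)^i * ((k+1).choose i : ℝ) * degFall lam ((i:ℝ)+(r:ℝ)) (n+1)
      = ((k:ℝ)+1+(r:ℝ)-(n:ℝ)*lam) * ((-1:ℝ)^i * ((k+1).choose i : ℝ) * degFall lam ((i:ℝ)+(r:ℝ)) n)
        - ((k:ℝ)+1) * ((-1:ℝ)^i * (k.choose i : ℝ) * degFall lam ((i:ℝ)+(r:ℝ)) n) := by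
    intro i hi
    have hik : i ≤ k + 1 := Nat.lt_succ_iff.mp (Finset.mem_range.mp hi)
    have hnat : (k.choose i) * (k + 1) = ((k+1).choose i) * (k + 1 - i) := Nat.choose_mul_succ_eq k i
    have hcast : (k.choose i : ℝ) * ((k:ℝ)+1) = ((k+1).choose i : ℝ) * ((k:ℝ)+1-(i:ℝ)) := by
      have := congrArg (fun t : ℕ => (t : ℝ)) hnat
      push_cast [Nat.cast_sub hik] at this
      push_cast
      linarith [this]
    rw [degFall_succ]
    linear_combination ((-1:ℝ)^i * degFall lam ((i:ℝ)+(r:ℝ)) n) * hcast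
  unfold U
  rw [Finset.sum_congr rfl key, Finset.sum_sub_distrib, ← Finset.mul_sum, ← Finset.mul_sum]
  congr 1
  congr 1
  rw [Finset.sum_range_succ]
  simp

lemma stirling_rec (lam : ℝ) (r n k : ℕ) :
    degrStirling lam r (n+1) (k+1)
      = degrStirling lam r n k
        + ((k:ℝ) + 1 + (r:ℝ) - (n:ℝ)*lam) * degrStirling lam r n (k+1) := by
  rw [stirling_eq_U, stirling_eq_U, stirling_eq_U, U_rec]
  have h1 : (Nat.factorial (k+1) : ℝ) = ((k:ℝ)+1) * (Nat.factorial k : ℝ) := by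
    rw [Nat.factorial_succ]; push_cast; ring
  have h2 : (Nat.factorial k : ℝ) ≠ 0 := Nat.cast_ne_zero.mpr (Nat.factorial_ne_zero k)
  have h3 : ((k:ℝ)+1) ≠ 0 := by positivity
  rw [h1, pow_succ]
  field_simp
  ring

lemma stirling_zero (lam : ℝ) (r n : ℕ) :
    degrStirling lam r n 0 = degFall lam (r:ℝ) n := by
  unfold degrStirling
  simp [degFall]

lemma stirling_rec_zero (lam : ℝ) (r n : ℕ) :
    degrStirling lam r (n+1) 0 = ((r:ℝ) - (n:ℝ)*lam) * degrStirling lam r n 0 := by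
  rw [stirling_zero, stirling_zero, degFall_succ]; ring

lemma stirling_vanish (lam : ℝ) (r : ℕ) :
    ∀ n k : ℕ, n < k → degrStirling lam r n k = 0 := by
  intro n
  induction n with
  | zero =>
      intro k hk
      rw [stirling_eq_U]
      have : U lam r 0 k = 0 := by
        unfold U
        have hz : ∑ i ∈ Finset.range (k+1), (-1:ℤ)^i * (k.choose i : ℤ) = 0 := by
          have := Int.alternating_sum_range_choose (n := k)
          rwa [if_neg (by omega)] at this
        have : ((∑ i ∈ Finset.range (k+1), (-1:ℤ)^i * (k.choose i : ℤ) : ℤ) : ℝ) = 0 := by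
          rw [hz]; norm_num
        push_cast at this
        calc ∑ i ∈ Finset.range (k+1), (-1:ℝ)^i * (k.choose i : ℝ) * degFall lam ((i:ℝ)+(r:ℝ)) 0
            = ∑ i ∈ Finset.range (k+1), (-1:ℝ)^i * (k.choose i : ℝ) := by
              refine Finset.sum_congr rfl fun i _ => ?_
              simp [degFall]
          _ = 0 := this
      rw [this, mul_zero]
  | succ n ih =>
      intro k hk
      obtain ⟨k', rfl⟩ : ∃ k', k = k' + 1 := ⟨k - 1, by omega⟩
      rw [stirling_rec, ih k' (by omega), ih (k'+1) (by omega)]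
      ring

noncomputable def ff (x : ℝ) (k : ℕ) : ℝ := ∏ i ∈ Finset.range k, (x - (i : ℝ))

lemma ff_succ (x : ℝ) (k : ℕ) : ff x (k+1) = ff x k * (x - (k : ℝ)) :=
  Finset.prod_range_succ _ _

lemma ff_add (x : ℝ) (k p : ℕ) : ff x (k + p) = ff x k * ff (x - (k : ℝ)) p := by
  induction p with
  | zero => simp [ff]
  | succ p ih =>
      rw [← Nat.add_assoc, ff_succ, ih, ff_succ]
      push_cast
      ring

lemma newton (lam : ℝ) (r : ℕ) (n : ℕ) (x : ℝ) :
    degFall lam (x + (r:ℝ)) n = ∑ k ∈ Finset.range (n+1), degrStirling lam r n k * ff x k := by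
  induction n with
  | zero => simp [degFall, ff, degrStirling]
  | succ n ih =>
      rw [degFall_succ, ih, Finset.sum_mul]
      have key : ∀ k ∈ Finset.range (n+1),
          degrStirling lam r n k * ff x k * (x + (r:ℝ) - (n:ℝ)*lam)
          = degrStirling lam r n k * ff x (k+1)
            + ((k:ℝ) + (r:ℝ) - (n:ℝ)*lam) * degrStirling lam r n k * ff x k := by
        intro k _
        rw [ff_succ]; ring
      rw [Finset.sum_congr rfl key, Finset.sum_add_distrib]
      -- RHS side
      rw [Finset.sum_range_succ' (fun k => degrStirling lam r (n+1) k * ff x k) (n+1)]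
      have hrec : ∀ k ∈ Finset.range (n+1),
          degrStirling lam r (n+1) (k+1) * ff x (k+1)
          = degrStirling lam r n k * ff x (k+1)
            + ((k:ℝ)+1+(r:ℝ)-(n:ℝ)*lam) * degrStirling lam r n (k+1) * ff x (k+1) := by
        intro k _
        rw [stirling_rec]; ring
      rw [Finset.sum_congr rfl hrec, Finset.sum_add_distrib]
      have hB : ∑ k ∈ Finset.range (n+1),
            ((k:ℝ)+1+(r:ℝ)-(n:ℝ)*lam) * degrStirling lam r n (k+1) * ff x (k+1)
            + degrStirling lam r (n+1) 0 * ff x 0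
          = ∑ k ∈ Finset.range (n+1), ((k:ℝ) + (r:ℝ) - (n:ℝ)*lam) * degrStirling lam r n k * ff x k := by
        rw [Finset.sum_range_succ' (fun k => ((k:ℝ) + (r:ℝ) - (n:ℝ)*lam) * degrStirling lam r n k * ff x k) n]
        rw [Finset.sum_range_succ
          (fun k => ((k:ℝ)+1+(r:ℝ)-(n:ℝ)*lam) * degrStirling lam r n (k+1) * ff x (k+1)) n]
        rw [stirling_vanish lam r n (n+1) (by omega), stirling_rec_zero]
        have : ∀ k ∈ Finset.range n,
            ((k:ℝ)+1+(r:ℝ)-(n:ℝ)*lam) * degrStirling lam r n (k+1) * ff x (k+1)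
            = (((k+1:ℕ):ℝ) + (r:ℝ) - (n:ℝ)*lam) * degrStirling lam r n (k+1) * ff x (k+1) := by
          intro k _; push_cast; ring
        rw [Finset.sum_congr rfl this]
        simp [ff]
      rw [← hB]
      ring

lemma ff_nat_self (t : ℕ) : ff ((t:ℕ):ℝ) t = (Nat.factorial t : ℝ) := by
  have h1 : ff ((t:ℕ):ℝ) t = ((∏ i ∈ Finset.range t, (t - i) : ℕ) : ℝ) := by
    rw [ff, Nat.cast_prod]
    refine Finset.prod_congr rfl fun i hi => ?_
    have hit : i ≤ t := le_of_lt (Finset.mem_range.mp hi)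
    rw [Nat.cast_sub hit]
  rw [h1]
  congr 1
  calc ∏ i ∈ Finset.range t, (t - i) = ∏ i ∈ Finset.range t, (i + 1) := by
        rw [← Finset.prod_range_reflect (fun i => i + 1) t]
        refine Finset.prod_congr rfl fun i hi => ?_
        have := Finset.mem_range.mp hi
        omega
    _ = Nat.factorial t := Finset.prod_range_add_one_eq_factorial t

lemma ff_nat_zero (t k : ℕ) (h : t < k) : ff ((t:ℕ):ℝ) k = 0 :=
  Finset.prod_eq_zero (Finset.mem_range.mpr h) (by simp)

lemma uniq (N : ℕ) (c : ℕ → ℝ)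
    (h : ∀ t : ℕ, ∑ k ∈ Finset.range N, c k * ff ((t:ℕ):ℝ) k = 0) :
    ∀ k, k < N → c k = 0 := by
  intro k
  induction k using Nat.strong_induction_on with
  | _ k ih =>
    intro hkN
    have h0 := h k
    have hs : ∑ k' ∈ Finset.range N, c k' * ff ((k:ℕ):ℝ) k' = c k * (Nat.factorial k : ℝ) := by
      rw [Finset.sum_eq_single_of_mem k (Finset.mem_range.mpr hkN)]
      · rw [ff_nat_self]
      · intro b hb hbk
        rcases Nat.lt_or_ge b k with hlt | hge
        · rw [ih b hlt (lt_trans hlt hkN), zero_mul]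
        · have : k < b := by omega
          rw [ff_nat_zero k b this, mul_zero]
    rw [hs] at h0
    have : (Nat.factorial k : ℝ) ≠ 0 := Nat.cast_ne_zero.mpr (Nat.factorial_ne_zero k)
    exact (mul_eq_zero.mp h0).resolve_right this

lemma collapse (n j : ℕ) (C : ℕ → ℕ → ℕ → ℝ) (g : ℕ → ℝ) :
    ∑ s ∈ Finset.range (j+n+1),
      (∑ k ∈ Finset.range (n+1), ∑ m ∈ Finset.range (j+1), ∑ p ∈ Finset.range (m+1),
        if k + p = s then C k m p else 0) * g s
    = ∑ k ∈ Finset.range (n+1), ∑ m ∈ Finset.range (j+1), ∑ p ∈ Finset.range (m+1),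
        C k m p * g (k+p) := by
  simp only [Finset.sum_mul, ite_mul, zero_mul]
  rw [Finset.sum_comm]
  refine Finset.sum_congr rfl fun k hk => ?_
  rw [Finset.sum_comm]
  refine Finset.sum_congr rfl fun m hm => ?_
  rw [Finset.sum_comm]
  refine Finset.sum_congr rfl fun p hp => ?_
  have hmem : k + p ∈ Finset.range (j+n+1) := by
    have hk' := Finset.mem_range.mp hk
    have hm' := Finset.mem_range.mp hm
    have hp' := Finset.mem_range.mp hp
    exact Finset.mem_range.mpr (by omega)
  rw [Finset.sum_ite_eq (Finset.range (j+n+1)) (k+p) (fun s => C k m p * g s), if_pos hmem]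

/-- Spivey-type relation for the degenerate `r`-Bell polynomials. -/
theorem spivey_degrBell (lam : ℝ) (r : ℕ) (hr : 0 < r) (j n : ℕ) (y : ℝ) :
    degrBell lam r (j + n) y =
      ∑ k ∈ Finset.range (n + 1), ∑ m ∈ Finset.range (j + 1),
        degrStirling lam r n k * (Nat.choose j m : ℝ) *
          degFall lam ((k : ℝ) - (n : ℝ) * lam) (j - m) * y ^ k * degrBell lam r m y := by
  classical
  set C : ℕ → ℕ → ℕ → ℝ := fun k m p =>
    degrStirling lam r n k * (j.choose m : ℝ) * degFall lam ((k:ℝ) - (n:ℝ)*lam) (j-m)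
      * degrStirling lam r m p with hC
  have hfall : ∀ x : ℝ,
      degFall lam (x + (r:ℝ)) (j+n)
      = ∑ k ∈ Finset.range (n+1), ∑ m ∈ Finset.range (j+1), ∑ p ∈ Finset.range (m+1),
          C k m p * ff x (k+p) := by
    intro x
    rw [Nat.add_comm j n, degFall_add, newton, Finset.sum_mul]
    refine Finset.sum_congr rfl fun k hk => ?_
    have hx : x + (r:ℝ) - (n:ℝ)*lam = ((x - (k:ℝ)) + (r:ℝ)) + ((k:ℝ) - (n:ℝ)*lam) := by ring
    rw [hx, vand, Finset.mul_sum]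
    refine Finset.sum_congr rfl fun m hm => ?_
    rw [newton lam r m (x - (k:ℝ))]
    simp only [Finset.mul_sum, Finset.sum_mul]
    refine Finset.sum_congr rfl fun p hp => ?_
    rw [ff_add]
    simp only [hC]
    ring
  have key : ∀ s, s < j + n + 1 → degrStirling lam r (j+n) s =
      ∑ k ∈ Finset.range (n+1), ∑ m ∈ Finset.range (j+1), ∑ p ∈ Finset.range (m+1),
        if k + p = s then C k m p else 0 := by
    have huniq := uniq (j+n+1)
      (fun s => degrStirling lam r (j+n) s -
        ∑ k ∈ Finset.range (n+1), ∑ m ∈ Finset.range (j+1), ∑ p ∈ Finset.range (m+1),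
          if k + p = s then C k m p else 0) ?_
    · intro s hs
      have h0 := huniq s hs
      linarith [h0]
    · intro t
      simp only [sub_mul, Finset.sum_sub_distrib]
      rw [collapse n j C (fun s => ff ((t:ℕ):ℝ) s), ← hfall ((t:ℕ):ℝ), ← newton lam r (j+n) ((t:ℕ):ℝ)]
      ring
  -- assemble
  unfold degrBell
  rw [Finset.sum_congr rfl (fun s hs =>
    by rw [key s (Finset.mem_range.mp hs)] :
      ∀ s ∈ Finset.range (j+n+1), degrStirling lam r (j+n) s * y ^ s
        = (∑ k ∈ Finset.range (n+1), ∑ m ∈ Finset.range (j+1), ∑ p ∈ Finset.range (m+1),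
            if k + p = s then C k m p else 0) * y ^ s)]
  rw [collapse n j C (fun s => y ^ s)]
  refine Finset.sum_congr rfl fun k hk => ?_
  refine Finset.sum_congr rfl fun m hm => ?_
  simp only [Finset.mul_sum, Finset.sum_mul]
  refine Finset.sum_congr rfl fun p hp => ?_
  simp only [hC, pow_add]
  ring
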